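/- arXiv:2506.20143 — 7 statements merged into one kernel-verified Lean document; each statement's English description precedes it below -/
import Mathlib

section
/- Let T = (T₁, T₂) be a commuting pair of bounded operators on a complex Hilbert space H whose defect operator vanishes, i.e. I − T₁*T₁ − T₂*T₂ + T₁*T₂*T₁T₂ = 0. Then β_α(T) = 0 for every α = (α₁, α₂) ∈ ℤ₊² with α₁α₂ ≠ 0, where β_α(T) = Σ_{0 ≤ β ≤ α} (-1)^{|β|} C(α,β) T^{*β} T^β. -/
open ContinuousLinearMap

variable {H : Type*} [NormedAddCommGroup H] [InnerProductSpace ℂ H] [CompleteSpace H]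

/-- The operator `β_α(T)` associated with a pair of operators. -/
noncomputable def betaOp (T1 T2 : H →L[ℂ] H) (a : ℕ × ℕ) : H →L[ℂ] H :=
  ∑ b ∈ Finset.range (a.1 + 1) ×ˢ Finset.range (a.2 + 1),
    ((-1 : ℂ) ^ (b.1 + b.2) * (a.1.choose b.1 : ℂ) * (a.2.choose b.2 : ℂ)) •
      (adjoint (T1 ^ b.1 * T2 ^ b.2) * (T1 ^ b.1 * T2 ^ b.2))

/-- The conjugation endomorphism `X ↦ T* X T` on `B(H)`. -/
noncomputable def conjMap (T : H →L[ℂ] H) : Module.End ℂ (H →L[ℂ] H) where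
  toFun X := adjoint T * X * T
  map_add' x y := by simp [mul_add, add_mul]
  map_smul' c x := by simp [mul_smul_comm, smul_mul_assoc]

lemma conjMap_apply (T X : H →L[ℂ] H) : conjMap T X = adjoint T * X * T := rfl

lemma conjMap_pow_apply (T : H →L[ℂ] H) (k : ℕ) (X : H →L[ℂ] H) :
    (conjMap T ^ k) X = adjoint (T ^ k) * X * T ^ k := by
  induction k generalizing X with
  | zero =>
    simp only [pow_zero]
    rw [← star_eq_adjoint, star_one, one_mul, mul_one, Module.End.one_apply]
  | succ n ih =>
    rw [pow_succ', Module.End.mul_apply, conjMap_apply, ih, pow_succ,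
      show adjoint (T ^ n * T) = adjoint T * adjoint (T ^ n) by
        rw [← star_eq_adjoint, ← star_eq_adjoint, ← star_eq_adjoint, star_mul]]
    simp only [mul_assoc]

lemma one_sub_pow_apply (f : Module.End ℂ (H →L[ℂ] H)) (n : ℕ) (X : H →L[ℂ] H) :
    ((1 - f) ^ n) X
      = ∑ k ∈ Finset.range (n + 1), ((-1 : ℂ) ^ k * (n.choose k : ℂ)) • (f ^ k) X := by
  have h := (Commute.one_right (-f)).add_pow n
  rw [neg_add_eq_sub] at h
  rw [h, LinearMap.sum_apply]
  refine Finset.sum_congr rfl fun k hk => ?_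
  rw [one_pow, mul_one, Module.End.mul_apply, Module.End.natCast_apply,
    (neg_one_smul ℂ f).symm, smul_pow, LinearMap.smul_apply, LinearMap.map_smul_of_tower,
    ← Nat.cast_smul_eq_nsmul ℂ, smul_smul]

lemma adjoint_comm (T1 T2 : H →L[ℂ] H) (hcomm : T1 * T2 = T2 * T1) :
    adjoint T1 * adjoint T2 = adjoint T2 * adjoint T1 := by
  rw [← star_eq_adjoint, ← star_eq_adjoint, ← star_mul, ← star_mul, hcomm]

lemma betaOp_eq (T1 T2 : H →L[ℂ] H) (hcomm : T1 * T2 = T2 * T1) (a : ℕ × ℕ) :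
    betaOp T1 T2 a
      = ((1 - conjMap T1) ^ a.1) (((1 - conjMap T2) ^ a.2) (1 : H →L[ℂ] H)) := by
  have hc : Commute T1 T2 := hcomm
  have hadj : Commute (adjoint T2) (adjoint T1) := (adjoint_comm T1 T2 hcomm).symm
  rw [one_sub_pow_apply, one_sub_pow_apply]
  rw [betaOp, Finset.sum_product]
  refine Finset.sum_congr rfl fun k hk => ?_
  rw [map_sum]
  rw [Finset.smul_sum]
  refine Finset.sum_congr rfl fun j hj => ?_
  rw [LinearMap.map_smul_of_tower, smul_smul, conjMap_pow_apply, conjMap_pow_apply, mul_one]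
  congr 1
  · ring
  · rw [show adjoint (T1 ^ k * T2 ^ j) = adjoint (T2 ^ j) * adjoint (T1 ^ k) by
      rw [← star_eq_adjoint, ← star_eq_adjoint, ← star_eq_adjoint, star_mul]]
    rw [show adjoint (T2 ^ j) = (adjoint T2) ^ j by
      rw [← star_eq_adjoint, ← star_eq_adjoint, star_pow]]
    rw [show adjoint (T1 ^ k) = (adjoint T1) ^ k by
      rw [← star_eq_adjoint, ← star_eq_adjoint, star_pow]]
    rw [mul_assoc, (hc.pow_pow k j).eq, ← mul_assoc, ← mul_assoc, (hadj.pow_pow j k).eq]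
    simp only [mul_assoc]

lemma conjMap_comm (T1 T2 : H →L[ℂ] H) (hcomm : T1 * T2 = T2 * T1) :
    Commute (conjMap T1) (conjMap T2) := by
  have hadj := adjoint_comm T1 T2 hcomm
  refine LinearMap.ext fun X => ?_
  simp only [Module.End.mul_apply, conjMap_apply, ← mul_assoc]
  rw [hadj, mul_assoc _ T2 T1, ← hcomm, ← mul_assoc]

theorem stmt1 (T1 T2 : H →L[ℂ] H) (hcomm : T1 * T2 = T2 * T1)
    (hdef : (1 : H →L[ℂ] H) - adjoint T1 * T1 - adjoint T2 * T2
      + adjoint T1 * (adjoint T2 * (T1 * T2)) = 0)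
    (a : ℕ × ℕ) (ha : a.1 * a.2 ≠ 0) :
    betaOp T1 T2 a = 0 := by
  obtain ⟨a1, a2⟩ := a
  simp only [Nat.mul_ne_zero_iff] at ha
  obtain ⟨m, rfl⟩ : ∃ m, a1 = m + 1 := ⟨a1 - 1, (Nat.succ_pred_eq_of_pos (Nat.pos_of_ne_zero ha.1)).symm⟩
  obtain ⟨n, rfl⟩ : ∃ n, a2 = n + 1 := ⟨a2 - 1, (Nat.succ_pred_eq_of_pos (Nat.pos_of_ne_zero ha.2)).symm⟩
  rw [betaOp_eq T1 T2 hcomm]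
  set P := 1 - conjMap T1 with hP
  set Q := 1 - conjMap T2 with hQ
  have hPQ : Commute P Q :=
    (Commute.one_left Q).sub_left
      ((Commute.one_right (conjMap T1)).sub_right (conjMap_comm T1 T2 hcomm))
  have h0 : P (Q (1 : H →L[ℂ] H)) = 0 := by
    rw [hP, hQ]
    simp only [LinearMap.sub_apply, Module.End.one_apply, conjMap_apply, map_sub, mul_one]
    rw [mul_assoc (adjoint T1) (adjoint T2 * T2) T1, mul_assoc (adjoint T2) T2 T1, ← hcomm,
      ← mul_assoc (adjoint T2) T1 T2,
      show ∀ x a b c : H →L[ℂ] H, x - a - (b - c) = x - a - b + c from fun _ _ _ _ => by abel]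
    exact hdef
  have key : P ^ (m + 1) * Q ^ (n + 1) = P ^ m * (Q ^ n * (P * Q)) := by
    rw [pow_succ, pow_succ, mul_assoc, ← mul_assoc P (Q ^ n) Q, (hPQ.pow_right n).eq,
      mul_assoc (Q ^ n) P Q, ← mul_assoc (P ^ m)]
  calc (P ^ (m + 1)) ((Q ^ (n + 1)) 1)
      = (P ^ (m + 1) * Q ^ (n + 1)) (1 : H →L[ℂ] H) := rfl
    _ = (P ^ m) ((Q ^ n) ((P * Q) (1 : H →L[ℂ] H))) := by rw [key]; rfl
    _ = 0 := by rw [Module.End.mul_apply, h0, map_zero, map_zero]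
end

section
/- Let T = (T₁, T₂) be a commuting pair of bounded operators on a complex Hilbert space H such that I − T₁*T₁ − T₂*T₂ + T₁*T₂*T₁T₂ = 0. Then for all integers k, l ≥ 0, T₁^{*k} T₂^{*l} T₁^k T₂^l = T₁^{*k} T₁^k + T₂^{*l} T₂^l − I. -/
open ContinuousLinearMap

theorem stmt2 {H : Type*} [NormedAddCommGroup H] [InnerProductSpace ℂ H] [CompleteSpace H]
    (T1 T2 : H →L[ℂ] H) (hcomm : T1 * T2 = T2 * T1)
    (hdef : (1 : H →L[ℂ] H) - adjoint T1 * T1 - adjoint T2 * T2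
      + adjoint T1 * (adjoint T2 * (T1 * T2)) = 0)
    (k l : ℕ) :
    adjoint (T1 ^ k) * (adjoint (T2 ^ l) * (T1 ^ k * T2 ^ l)) =
      adjoint (T1 ^ k) * T1 ^ k + adjoint (T2 ^ l) * T2 ^ l - 1 := by
  simp only [← star_eq_adjoint, star_pow] at hdef ⊢
  have c : Commute T1 T2 := hcomm
  have cs : Commute (star T1) (star T2) := c.star_star
  -- basic identity
  have h1 : star T2 * (star T1 * T1) * T2 = star T1 * T1 + star T2 * T2 - 1 := by
    have e : star T1 * (star T2 * (T1 * T2)) = star T2 * (star T1 * T1) * T2 := by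
      rw [← mul_assoc, cs.eq]; noncomm_ring
    rw [e] at hdef
    rw [← sub_eq_zero, ← hdef]; abel
  -- conjugation of star T1 * T1 by powers of T2
  have key : ∀ n : ℕ, star T2 ^ n * (star T1 * T1) * T2 ^ n
      = star T1 * T1 + star T2 ^ n * T2 ^ n - 1 := by
    intro n
    induction n with
    | zero => simp
    | succ m ih =>
      calc star T2 ^ (m + 1) * (star T1 * T1) * T2 ^ (m + 1)
          = star T2 ^ m * (star T2 * (star T1 * T1) * T2) * T2 ^ m := by
            rw [pow_succ (star T2), pow_succ' T2]; noncomm_ring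
        _ = star T2 ^ m * (star T1 * T1 + star T2 * T2 - 1) * T2 ^ m := by rw [h1]
        _ = star T2 ^ m * (star T1 * T1) * T2 ^ m
              + (star T2 ^ m * star T2) * (T2 * T2 ^ m) - star T2 ^ m * T2 ^ m := by
            noncomm_ring
        _ = star T1 * T1 + star T2 ^ (m + 1) * T2 ^ (m + 1) - 1 := by
            rw [ih, ← pow_succ (star T2), ← pow_succ' T2]; abel
  -- conjugation of star T2 ^ l * T2 ^ l by T1
  have key' : ∀ n : ℕ, star T1 * (star T2 ^ n * T2 ^ n) * T1
      = star T1 * T1 + star T2 ^ n * T2 ^ n - 1 := by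
    intro n
    have c1 : star T1 * star T2 ^ n = star T2 ^ n * star T1 := (cs.pow_right n).eq
    have c2 : T2 ^ n * T1 = T1 * T2 ^ n := ((c.pow_right n).symm).eq
    calc star T1 * (star T2 ^ n * T2 ^ n) * T1
        = (star T1 * star T2 ^ n) * (T2 ^ n * T1) := by noncomm_ring
      _ = star T2 ^ n * (star T1 * T1) * T2 ^ n := by rw [c1, c2]; noncomm_ring
      _ = star T1 * T1 + star T2 ^ n * T2 ^ n - 1 := key n
  -- main lemma
  have main : ∀ m : ℕ, star T2 ^ l * (star T1 ^ m * T1 ^ m) * T2 ^ l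
      = star T1 ^ m * T1 ^ m + star T2 ^ l * T2 ^ l - 1 := by
    intro m
    induction m with
    | zero => simp
    | succ j ih =>
      have c1 : star T2 ^ l * star T1 = star T1 * star T2 ^ l := ((cs.symm.pow_left l)).eq
      have c2 : T1 * T2 ^ l = T2 ^ l * T1 := (c.pow_right l).eq
      calc star T2 ^ l * (star T1 ^ (j + 1) * T1 ^ (j + 1)) * T2 ^ l
          = (star T2 ^ l * star T1) * (star T1 ^ j * T1 ^ j) * (T1 * T2 ^ l) := by
            rw [pow_succ' (star T1), pow_succ T1]; noncomm_ring
        _ = star T1 * (star T2 ^ l * (star T1 ^ j * T1 ^ j) * T2 ^ l) * T1 := by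
            rw [c1, c2]; noncomm_ring
        _ = star T1 * (star T1 ^ j * T1 ^ j + star T2 ^ l * T2 ^ l - 1) * T1 := by rw [ih]
        _ = (star T1 * star T1 ^ j) * (T1 ^ j * T1)
              + star T1 * (star T2 ^ l * T2 ^ l) * T1 - star T1 * T1 := by noncomm_ring
        _ = star T1 ^ (j + 1) * T1 ^ (j + 1) + star T2 ^ l * T2 ^ l - 1 := by
            rw [key' l, ← pow_succ' (star T1), ← pow_succ T1]; abel
  -- conclude
  have c1 : star T1 ^ k * star T2 ^ l = star T2 ^ l * star T1 ^ k := (cs.pow_pow k l).eq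
  have c2 : T1 ^ k * T2 ^ l = T2 ^ l * T1 ^ k := (c.pow_pow k l).eq
  calc star T1 ^ k * (star T2 ^ l * (T1 ^ k * T2 ^ l))
      = (star T1 ^ k * star T2 ^ l) * (T1 ^ k * T2 ^ l) := by noncomm_ring
    _ = star T2 ^ l * (star T1 ^ k * T1 ^ k) * T2 ^ l := by rw [c1]; noncomm_ring
    _ = star T1 ^ k * T1 ^ k + star T2 ^ l * T2 ^ l - 1 := main k
end

section
/- Let T₁ and T₂ be commuting completely hyperexpansive bounded operators on a Hilbert space H (i.e., for each j and each n ≥ 1, Σ_{k=0}^{n} (-1)^k C(n,k) T_j^{*k}T_j^k ≤ 0) whose defect operator I − T₁*T₁ − T₂*T₂ + T₁*T₂*T₁T₂ is zero. Then the pair T = (T₁,T₂) is toral completely hyperexpansive: for every α ∈ ℤ₊² \ {0}, β_α(T) = Σ_{0 ≤ β ≤ α} (-1)^{|β|} C(α,β) T^{*β}T^β ≤ 0. -/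
open ContinuousLinearMap

variable {H : Type*} [NormedAddCommGroup H] [InnerProductSpace ℂ H] [CompleteSpace H]

/-- A single operator is completely hyperexpansive if all its alternating binomial
sums of order `n ≥ 1` are nonpositive. -/
def CompletelyHyperexpansive (S : H →L[ℂ] H) : Prop :=
  ∀ n : ℕ, 1 ≤ n → ∀ x : H,
    (inner ℂ ((∑ k ∈ Finset.range (n + 1),
      ((-1 : ℂ) ^ k * (n.choose k : ℂ)) • (adjoint (S ^ k) * S ^ k)) x) x : ℂ).re ≤ 0

/-- Alternating binomial sums of order `n+1` via first differences of order `n`. -/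
lemma altsum_aux {E : Type*} [AddCommGroup E] [Module ℂ E] (m : ℕ) (f : ℕ → E) :
    ∑ j ∈ Finset.range (m + 2), ((-1:ℂ)^j * ((m+1).choose j : ℂ)) • f j
    = ∑ j ∈ Finset.range (m + 1), ((-1:ℂ)^j * (m.choose j : ℂ)) • (f j - f (j+1)) := by
  rw [Finset.sum_range_succ' _ (m+1)]
  have hsplit : ∀ j, ((-1:ℂ)^(j+1) * (((m+1)).choose (j+1) : ℂ)) • f (j+1)
      = ((-1:ℂ)^(j+1) * ((m.choose (j+1)) : ℂ)) • f (j+1)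
        - ((-1:ℂ)^j * ((m.choose j) : ℂ)) • f (j+1) := by
    intro j
    rw [← sub_smul, Nat.choose_succ_succ]
    congr 1
    push_cast
    ring
  simp only [hsplit]
  rw [Finset.sum_sub_distrib]
  simp only [smul_sub]
  rw [Finset.sum_sub_distrib]
  have hA : (∑ j ∈ Finset.range (m+1), ((-1:ℂ)^(j+1) * (m.choose (j+1) : ℂ)) • f (j+1))
      + ((-1:ℂ)^0 * (((m+1)).choose 0 : ℂ)) • f 0
      = ∑ j ∈ Finset.range (m+1), ((-1:ℂ)^j * (m.choose j : ℂ)) • f j := by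
    rw [Finset.sum_range_succ]
    rw [Finset.sum_range_succ' (fun j => ((-1:ℂ)^j * (m.choose j : ℂ)) • f j) m]
    simp [Nat.choose_succ_self]
  rw [← hA]
  abel

/-- Conjugating the vanishing defect operator by `T1^j * T2^k`. -/
lemma key_aux (T1 T2 : H →L[ℂ] H) (hcomm : T1 * T2 = T2 * T1)
    (hdef : (1 : H →L[ℂ] H) - adjoint T1 * T1 - adjoint T2 * T2
      + adjoint T1 * (adjoint T2 * (T1 * T2)) = 0) (j k : ℕ) :
    adjoint (T1^j * T2^k) * (T1^j * T2^k)
      - adjoint (T1^(j+1) * T2^k) * (T1^(j+1) * T2^k)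
      - adjoint (T1^j * T2^(k+1)) * (T1^j * T2^(k+1))
      + adjoint (T1^(j+1) * T2^(k+1)) * (T1^(j+1) * T2^(k+1)) = 0 := by
  simp only [← star_eq_adjoint] at hdef ⊢
  have hcs : star T2 * star T1 = star T1 * star T2 := by
    have := congrArg star hcomm
    simpa [star_mul] using this
  have hdef2 : (1 : H →L[ℂ] H) - star T1 * T1 - star T2 * T2
      + star T2 * (star T1 * (T1 * T2)) = 0 := by
    rw [← mul_assoc, hcs, mul_assoc]; exact hdef
  have hc : Commute T1 T2 := hcomm
  have e1 : T1 ^ (j+1) * T2 ^ k = T1 * (T1^j * T2^k) := by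
    rw [pow_succ']; rw [mul_assoc]
  have e2 : T1 ^ j * T2 ^ (k+1) = T2 * (T1^j * T2^k) := by
    rw [pow_succ' T2 k, ← mul_assoc, ← (hc.symm.pow_right j).eq, mul_assoc]
  have e3 : T1 ^ (j+1) * T2 ^ (k+1) = (T1 * T2) * (T1^j * T2^k) := by
    rw [pow_succ' T1 j, mul_assoc, e2, ← mul_assoc]
  rw [e1, e2, e3]
  have : star (T1^j * T2^k) * (T1^j * T2^k)
      - star (T1 * (T1^j * T2^k)) * (T1 * (T1^j * T2^k))
      - star (T2 * (T1^j * T2^k)) * (T2 * (T1^j * T2^k))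
      + star ((T1 * T2) * (T1^j * T2^k)) * ((T1 * T2) * (T1^j * T2^k))
      = star (T1^j * T2^k) * (((1 : H →L[ℂ] H) - star T1 * T1 - star T2 * T2
          + star T2 * (star T1 * (T1 * T2))) * (T1^j * T2^k)) := by
    simp only [star_mul]
    noncomm_ring
  rw [this, hdef2, zero_mul, mul_zero]

/-- For `m, n ≥ 1` (and vanishing defect), `β_{(m,n)}(T) = 0`. -/
lemma beta_eq_zero (T1 T2 : H →L[ℂ] H) (hcomm : T1 * T2 = T2 * T1)
    (hdef : (1 : H →L[ℂ] H) - adjoint T1 * T1 - adjoint T2 * T2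
      + adjoint T1 * (adjoint T2 * (T1 * T2)) = 0) (m n : ℕ) :
    betaOp T1 T2 (m + 1, n + 1) = 0 := by
  set Q : ℕ → ℕ → (H →L[ℂ] H) :=
    fun j k => adjoint (T1^j * T2^k) * (T1^j * T2^k) with hQ
  have hrw : betaOp T1 T2 (m + 1, n + 1)
      = ∑ j ∈ Finset.range (m + 2), ((-1:ℂ)^j * ((m+1).choose j : ℂ)) •
          (∑ k ∈ Finset.range (n + 2), ((-1:ℂ)^k * ((n+1).choose k : ℂ)) • Q j k) := by
    rw [betaOp, Finset.sum_product]
    refine Finset.sum_congr rfl fun j _ => ?_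
    rw [Finset.smul_sum]
    refine Finset.sum_congr rfl fun k _ => ?_
    rw [smul_smul]
    congr 1
    rw [pow_add]
    ring
  rw [hrw, altsum_aux]
  apply Finset.sum_eq_zero
  intro j _
  have hdiff : (∑ k ∈ Finset.range (n + 2), ((-1:ℂ)^k * ((n+1).choose k : ℂ)) • Q j k)
      - (∑ k ∈ Finset.range (n + 2), ((-1:ℂ)^k * ((n+1).choose k : ℂ)) • Q (j+1) k)
      = ∑ k ∈ Finset.range (n + 2), ((-1:ℂ)^k * ((n+1).choose k : ℂ)) •
          (Q j k - Q (j+1) k) := by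
    rw [← Finset.sum_sub_distrib]
    simp only [smul_sub]
  rw [hdiff, altsum_aux n (fun k => Q j k - Q (j+1) k)]
  have hz : ∀ k ∈ Finset.range (n + 1),
      ((-1:ℂ)^k * (n.choose k : ℂ)) •
        ((Q j k - Q (j+1) k) - (Q j (k+1) - Q (j+1) (k+1))) = 0 := by
    intro k _
    have hk := key_aux T1 T2 hcomm hdef j k
    have : (Q j k - Q (j+1) k) - (Q j (k+1) - Q (j+1) (k+1))
        = Q j k - Q (j+1) k - Q j (k+1) + Q (j+1) (k+1) := by abel
    rw [this, hQ]
    simp only []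
    rw [hk, smul_zero]
  rw [Finset.sum_congr rfl hz]
  simp

theorem stmt3 (T1 T2 : H →L[ℂ] H) (hcomm : T1 * T2 = T2 * T1)
    (h1 : CompletelyHyperexpansive T1) (h2 : CompletelyHyperexpansive T2)
    (hdef : (1 : H →L[ℂ] H) - adjoint T1 * T1 - adjoint T2 * T2
      + adjoint T1 * (adjoint T2 * (T1 * T2)) = 0) :
    ∀ a : ℕ × ℕ, a ≠ 0 → ∀ x : H, (inner ℂ (betaOp T1 T2 a x) x : ℂ).re ≤ 0 := by
  rintro ⟨m, n⟩ ha x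
  match m, n with
  | 0, 0 => exact absurd rfl ha
  | Nat.succ m, 0 =>
    have hb : betaOp T1 T2 (m + 1, 0)
        = ∑ k ∈ Finset.range (m + 1 + 1),
            ((-1 : ℂ) ^ k * ((m+1).choose k : ℂ)) • (adjoint (T1 ^ k) * T1 ^ k) := by
      rw [betaOp, Finset.sum_product]
      simp [Finset.sum_range_one]
    rw [hb]
    exact h1 (m + 1) (Nat.succ_le_succ (Nat.zero_le m)) x
  | 0, Nat.succ n =>
    have hb : betaOp T1 T2 (0, n + 1)
        = ∑ k ∈ Finset.range (n + 1 + 1),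
            ((-1 : ℂ) ^ k * ((n+1).choose k : ℂ)) • (adjoint (T2 ^ k) * T2 ^ k) := by
      rw [betaOp, Finset.sum_product]
      simp [Finset.sum_range_one]
    rw [hb]
    exact h2 (n + 1) (Nat.succ_le_succ (Nat.zero_le n)) x
  | Nat.succ m, Nat.succ n =>
    rw [beta_eq_zero T1 T2 hcomm hdef m n]
    simp
end

section
/- Let h ∈ H²(𝔻) be a function with h(0) = 0, and write h(w) = w·g(w) with g ∈ H²(𝔻). Then for every ζ ∈ 𝔻, ‖(h − h(ζ))/(w − ζ)‖²_{H²(𝔻)} ≥ |h(ζ)|². -/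
/-- The sequence of Taylor coefficients of the difference quotient
`(h - h(ζ))/(w - ζ)`, where `h` has Taylor coefficients `a`. -/
noncomputable def dq (a : ℕ → ℂ) (ζ : ℂ) (k : ℕ) : ℂ := ∑' m : ℕ, a (k + 1 + m) * ζ ^ m

/-- Evaluation of the power series with coefficients `a` at a point `ζ`. -/
noncomputable def evalSeq (a : ℕ → ℂ) (ζ : ℂ) : ℂ := ∑' n : ℕ, a n * ζ ^ n

theorem stmt5 (h : ℕ → ℂ) (ζ : ℂ) (hζ : ‖ζ‖ < 1)
    (hh : Summable fun n => ‖h n‖ ^ 2) (h0 : h 0 = 0)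
    (hdq : Summable fun k => ‖dq h ζ k‖ ^ 2) :
    ‖evalSeq h ζ‖ ^ 2 ≤ ∑' k : ℕ, ‖dq h ζ k‖ ^ 2 := by
  -- h is bounded
  have htend : Filter.Tendsto (fun n => ‖h n‖ ^ 2) Filter.atTop (nhds 0) :=
    hh.tendsto_atTop_zero
  obtain ⟨C, hC⟩ := htend.bddAbove_range
  have hCn : ∀ n, ‖h n‖ ≤ max C 1 := by
    intro n
    have h1 : ‖h n‖ ^ 2 ≤ C := hC ⟨n, rfl⟩
    nlinarith [norm_nonneg (h n), le_max_left C 1, le_max_right C 1,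
      sq_nonneg (‖h n‖ - max C 1)]
  have hCpos : (0:ℝ) ≤ max C 1 := le_trans zero_le_one (le_max_right C 1)
  -- summability of h n * ζ^n (and shifted versions)
  have hsum : ∀ j : ℕ, Summable (fun n : ℕ => h (n + j) * ζ ^ n) := by
    intro j
    apply Summable.of_norm
    apply Summable.of_nonneg_of_le (fun n => norm_nonneg _)
      (fun n => ?_) (((summable_geometric_of_lt_one (norm_nonneg ζ) hζ)).mul_left (max C 1))
    rw [norm_mul, norm_pow]
    exact mul_le_mul_of_nonneg_right (hCn _) (by positivity)
  -- evalSeq h ζ = ζ * dq h ζ 0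
  have key : evalSeq h ζ = ζ * dq h ζ 0 := by
    have hs : Summable (fun n : ℕ => h n * ζ ^ n) := by simpa using hsum 0
    rw [evalSeq, Summable.tsum_eq_zero_add hs, h0]
    simp only [zero_mul, zero_add, dq]
    rw [← tsum_mul_left]
    congr 1
    ext n
    ring_nf
  rw [key, norm_mul, mul_pow]
  have hz1 : ‖ζ‖ ^ 2 ≤ 1 := by nlinarith [norm_nonneg ζ]
  have h1 : ‖ζ‖ ^ 2 * ‖dq h ζ 0‖ ^ 2 ≤ ‖dq h ζ 0‖ ^ 2 :=
    mul_le_of_le_one_left (by positivity) hz1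
  exact h1.trans (Summable.le_tsum hdq 0 (fun k _ => by positivity))
end

section
/- Let μ be a finite positive Borel measure on the closed unit disc, and let ⟨f,g⟩_{D(μ)} = ⟨f,g⟩_{H²(𝔻)} + ∫_{cl 𝔻} ⟨(f − f(ζ))/(z−ζ), (g − g(ζ))/(z−ζ)⟩_{H²(𝔻)} dμ(ζ). Then for nonnegative integers i ≤ j, ⟨z^i, z^j⟩_{D(μ)} = δ(i,j) + Σ_{k=0}^{i−1} μ̂{j−k−1, i−k−1}, where μ̂{a,b} = ∫_{cl 𝔻} (conj ζ)^a ζ^b dμ(ζ) and δ is the Kronecker delta. -/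
open Polynomial MeasureTheory

/-- The divided difference `(z^m - ζ^m)/(z - ζ)`, as a polynomial. -/
noncomputable def divq (m : ℕ) (ζ : ℂ) : Polynomial ℂ :=
  (X ^ m - C (ζ ^ m)) /ₘ (X - C ζ)

lemma divq_coeff (m : ℕ) (ζ : ℂ) (k : ℕ) :
    (divq m ζ).coeff k = if k < m then ζ ^ (m - 1 - k) else 0 := by
  have h := Commute.geom_sum₂_mul (Commute.all (X : ℂ[X]) (C ζ)) m
  rw [← C_pow] at h
  rw [divq, ← h, mul_comm, mul_divByMonic_cancel_left _ (monic_X_sub_C ζ), finset_sum_coeff]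
  simp only [← C_pow, coeff_mul_C, coeff_X_pow]
  simp only [ite_mul, one_mul, zero_mul, Finset.sum_ite_eq (Finset.range m) k fun i => ζ ^ (m - 1 - i)]
  simp [Finset.mem_range]

theorem stmt6 (μ : Measure ℂ) [IsFiniteMeasure μ]
    (hsupp : ∀ᵐ ζ ∂μ, ‖ζ‖ ≤ 1) (i j : ℕ) (hij : i ≤ j) :
    (if i = j then (1 : ℂ) else 0)
        + ∫ ζ, (∑' k : ℕ, (divq i ζ).coeff k * (starRingEnd ℂ) ((divq j ζ).coeff k)) ∂μ
      = (if i = j then (1 : ℂ) else 0)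
        + ∑ k ∈ Finset.range i,
            ∫ ζ, ((starRingEnd ℂ) ζ) ^ (j - k - 1) * ζ ^ (i - k - 1) ∂μ := by
  congr 1
  have key : ∀ ζ : ℂ, (∑' k : ℕ, (divq i ζ).coeff k * (starRingEnd ℂ) ((divq j ζ).coeff k))
      = ∑ k ∈ Finset.range i, ((starRingEnd ℂ) ζ) ^ (j - k - 1) * ζ ^ (i - k - 1) := by
    intro ζ
    rw [tsum_eq_sum (s := Finset.range i) (by
      intro k hk
      rw [divq_coeff, if_neg (by simpa using hk), zero_mul])]
    refine Finset.sum_congr rfl fun k hk => ?_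
    rw [Finset.mem_range] at hk
    rw [divq_coeff, divq_coeff, if_pos hk, if_pos (lt_of_lt_of_le hk hij), map_pow, mul_comm]
    congr 2 <;> omega
  simp_rw [key]
  refine integral_finset_sum _ fun k hk => ?_
  refine Integrable.mono' (integrable_const 1)
    ((Continuous.mul (Complex.continuous_conj.pow _) (continuous_pow _)).aestronglyMeasurable) ?_
  filter_upwards [hsupp] with ζ hζ
  simp only [norm_mul, norm_pow, RCLike.norm_conj]
  exact mul_le_one₀ (pow_le_one₀ (norm_nonneg ζ) hζ) (by positivity) (pow_le_one₀ (norm_nonneg ζ) hζ)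
end

section
/- Let S be a 2-concave bounded operator on a Hilbert space H, i.e. I − 2S*S + S*²S² ≤ 0. Then S is expansive: ‖Sx‖ ≥ ‖x‖ for all x ∈ H. -/
theorem stmt10 {H : Type*} [NormedAddCommGroup H] [InnerProductSpace ℂ H] [CompleteSpace H]
    (S : H →L[ℂ] H)
    (hconc : ∀ x : H, ‖x‖ ^ 2 - 2 * ‖S x‖ ^ 2 + ‖(S ^ 2) x‖ ^ 2 ≤ 0) :
    ∀ x : H, ‖x‖ ^ 2 ≤ ‖S x‖ ^ 2 := by
  intro x
  by_contra h
  push_neg at h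
  -- differences are nonincreasing
  have key : ∀ n : ℕ, ‖(S ^ (n+1)) x‖ ^ 2 - ‖(S ^ n) x‖ ^ 2 ≤ ‖S x‖ ^ 2 - ‖x‖ ^ 2 := by
    intro n
    induction n with
    | zero => simp
    | succ k ih =>
      have h1 := hconc ((S ^ k) x)
      have e1 : S ((S ^ k) x) = (S ^ (k+1)) x := by
        rw [pow_succ']; rfl
      have e2 : (S ^ 2) ((S ^ k) x) = (S ^ (k+2)) x := by
        have : (S ^ (k+2)) = S ^ 2 * S ^ k := by rw [add_comm, pow_add]
        rw [this]; rfl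
      rw [e1, e2] at h1
      linarith
  have bound : ∀ n : ℕ, ‖(S ^ n) x‖ ^ 2 ≤ ‖x‖ ^ 2 + n * (‖S x‖ ^ 2 - ‖x‖ ^ 2) := by
    intro n
    induction n with
    | zero => simp
    | succ k ih =>
      have := key k
      push_cast at this ⊢
      push_cast at ih
      linarith
  obtain ⟨n, hn⟩ := exists_nat_gt (‖x‖ ^ 2 / (‖x‖ ^ 2 - ‖S x‖ ^ 2))
  have hd : 0 < ‖x‖ ^ 2 - ‖S x‖ ^ 2 := by linarith
  have h2 := bound n
  have h3 : (0:ℝ) ≤ ‖(S ^ n) x‖ ^ 2 := sq_nonneg _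
  have h4 : ‖x‖ ^ 2 < n * (‖x‖ ^ 2 - ‖S x‖ ^ 2) := by
    rwa [div_lt_iff₀ hd] at hn
  nlinarith
end

section
/- Let T₁, T₂ be commuting bounded operators on a Hilbert space H whose defect operator vanishes: I − T₁*T₁ − T₂*T₂ + T₁*T₂*T₁T₂ = 0. Then for all x ∈ H and all k, l ≥ 0, ‖T₁^k T₂^l x‖² = ‖T₁^k x‖² + ‖T₂^l x‖² − ‖x‖². -/
theorem stmt17 {H : Type*} [NormedAddCommGroup H] [InnerProductSpace ℂ H] [CompleteSpace H]
    (T1 T2 : H →L[ℂ] H) (hcomm : T1 * T2 = T2 * T1)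
    (hdef : ∀ x : H, ‖x‖ ^ 2 - ‖T1 x‖ ^ 2 - ‖T2 x‖ ^ 2 + ‖T1 (T2 x)‖ ^ 2 = 0) :
    ∀ (x : H) (k l : ℕ),
      ‖(T1 ^ k) ((T2 ^ l) x)‖ ^ 2 = ‖(T1 ^ k) x‖ ^ 2 + ‖(T2 ^ l) x‖ ^ 2 - ‖x‖ ^ 2 := by
  have hc : ∀ k : ℕ, (T1 ^ k) * T2 = T2 * (T1 ^ k) := fun k =>
    ((Commute.pow_left hcomm k)).eq ▸ rfl
  have hcx : ∀ (k : ℕ) (x : H), (T1 ^ k) (T2 x) = T2 ((T1 ^ k) x) := by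
    intro k x
    have := congrArg (fun f : H →L[ℂ] H => f x) (hc k)
    simpa [ContinuousLinearMap.mul_apply] using this
  -- lemma A
  have A : ∀ (k : ℕ) (x : H),
      ‖(T1 ^ k) (T2 x)‖ ^ 2 = ‖(T1 ^ k) x‖ ^ 2 + ‖T2 x‖ ^ 2 - ‖x‖ ^ 2 := by
    intro k
    induction k with
    | zero => intro x; simp
    | succ k ih =>
      intro x
      have h1 : (T1 ^ (k + 1)) (T2 x) = T1 ((T1 ^ k) (T2 x)) := by
        simp [pow_succ', ContinuousLinearMap.mul_apply]
      have h2 : (T1 ^ (k + 1)) x = T1 ((T1 ^ k) x) := by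
        simp [pow_succ', ContinuousLinearMap.mul_apply]
      rw [h1, h2, hcx k x]
      have hd := hdef ((T1 ^ k) x)
      have ihx := ih x
      rw [hcx k x] at ihx
      nlinarith [hd, ihx]
  intro x k l
  induction l with
  | zero => simp
  | succ l ih =>
    have h1 : (T2 ^ (l + 1)) x = T2 ((T2 ^ l) x) := by
      simp [pow_succ', ContinuousLinearMap.mul_apply]
    rw [h1]
    have := A k ((T2 ^ l) x)
    nlinarith [this, ih]
end
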